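/- arXiv:1611.00229 — 3 statements merged into one kernel-verified Lean document; each statement's English description precedes it below -/
import Mathlib

section
/- For n ≥ 3, the function r ↦ (∫₀^r (sin τ)^{n-1} dτ)^{2/n} · ((sin r)^{n-1})^{-1/(n-1)} is monotonically increasing on (0, π/2). -/
/-!
With `A(r) = ∫₀^r sin^(n-1)`, the function equals `A^p / sin` for `p = 2/n`, and its derivative
has the sign of `p sin^n - A cos`. Since `cos` decreases on `[0, π]`,
`A(r) cos r ≤ ∫₀^r sin^(n-1) τ cos τ dτ = sin^n r / n ≤ p sin^n r` whenever `n p ≥ 1`.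
-/

open Real Set

lemma integral_sin_pow_mul_cos (m : ℕ) (r : ℝ) :
    ∫ τ in (0 : ℝ)..r, sin τ ^ m * cos τ = sin r ^ (m + 1) / (m + 1) := by
  simpa [integral_pow] using integral_sin_pow_mul_cos_pow_odd (a := 0) (b := r) m 0

lemma integral_sin_pow_mul_cos_le {m : ℕ} {r : ℝ} (hr₀ : 0 ≤ r) (hrπ : r ≤ π) :
    (∫ τ in (0 : ℝ)..r, sin τ ^ m) * cos r ≤ sin r ^ (m + 1) / (m + 1) := by
  rw [← integral_sin_pow_mul_cos, ← intervalIntegral.integral_mul_const]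
  refine intervalIntegral.integral_mono_on hr₀ (by apply Continuous.intervalIntegrable; fun_prop)
    (by apply Continuous.intervalIntegrable; fun_prop) fun τ ⟨hτ₀, hτr⟩ => ?_
  have hsin : 0 ≤ sin τ ^ m := pow_nonneg (sin_nonneg_of_nonneg_of_le_pi hτ₀ (hτr.trans hrπ)) _
  exact mul_le_mul_of_nonneg_left (cos_le_cos_of_nonneg_of_le_pi hτ₀ hrπ hτr) hsin

lemma integral_sin_pow_pos_of_pos_of_le_pi (m : ℕ) {r : ℝ} (hr₀ : 0 < r) (hrπ : r ≤ π) :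
    0 < ∫ τ in (0 : ℝ)..r, sin τ ^ m :=
  intervalIntegral.intervalIntegral_pos_of_pos_on
    (by apply Continuous.intervalIntegrable; fun_prop)
    (fun τ ⟨hτ₀, hτr⟩ => pow_pos (sin_pos_of_pos_of_lt_pi hτ₀ (hτr.trans_le hrπ)) _) hr₀

lemma monotoneOn_integral_sin_pow_rpow_div_sin (m : ℕ) {p : ℝ} (hp : 1 ≤ (m + 1) * p) :
    MonotoneOn (fun r => (∫ τ in (0 : ℝ)..r, sin τ ^ m) ^ p / sin r) (Ioo 0 π) := by
  set A : ℝ → ℝ := fun r => ∫ τ in (0 : ℝ)..r, sin τ ^ m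
  have hderiv : ∀ r ∈ Ioo 0 π, HasDerivAt (fun r => A r ^ p / sin r)
      ((sin r ^ m * p * A r ^ (p - 1) * sin r - A r ^ p * cos r) / sin r ^ 2) r := by
    intro r ⟨hr₀, hrπ⟩
    have hA : HasDerivAt A (sin r ^ m) r :=
      (Continuous.integral_hasStrictDerivAt (by fun_prop) 0 r).hasDerivAt
    exact (hA.rpow_const (Or.inl (integral_sin_pow_pos_of_pos_of_le_pi m hr₀ hrπ.le).ne')).div
      (hasDerivAt_sin r) (sin_pos_of_pos_of_lt_pi hr₀ hrπ).ne'
  refine monotoneOn_of_hasDerivWithinAt_nonneg (convex_Ioo 0 π) (f' := fun r =>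
      (sin r ^ m * p * A r ^ (p - 1) * sin r - A r ^ p * cos r) / sin r ^ 2)
    (fun r hr => (hderiv r hr).continuousAt.continuousWithinAt)
    ?_ ?_ <;> rw [interior_Ioo]
  · exact fun r hr => (hderiv r hr).hasDerivWithinAt
  rintro r ⟨hr₀, hrπ⟩
  have hApos : 0 < A r := integral_sin_pow_pos_of_pos_of_le_pi m hr₀ hrπ.le
  have hsin : 0 < sin r := sin_pos_of_pos_of_lt_pi hr₀ hrπ
  have hm : (0 : ℝ) < m + 1 := by positivity
  have hcos : A r * cos r ≤ p * sin r ^ (m + 1) :=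
    calc A r * cos r ≤ sin r ^ (m + 1) / (m + 1) := integral_sin_pow_mul_cos_le hr₀.le hrπ.le
      _ ≤ p * sin r ^ (m + 1) := by
        rw [div_le_iff₀ hm]; nlinarith [pow_pos hsin (m + 1)]
  have hnum : sin r ^ m * p * A r ^ (p - 1) * sin r - A r ^ p * cos r
      = A r ^ (p - 1) * (p * sin r ^ (m + 1) - A r * cos r) := by
    rw [rpow_sub_one hApos.ne']
    field_simp
    ring
  rw [hnum]
  exact div_nonneg (mul_nonneg (rpow_nonneg hApos.le _) (sub_nonneg.2 hcos)) (sq_nonneg _)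

lemma pow_rpow_neg_one_div_natCast {x : ℝ} (hx : 0 ≤ x) {k : ℕ} (hk : k ≠ 0) :
    (x ^ k) ^ (-1 / (k : ℝ)) = x⁻¹ := by
  rw [neg_div, one_div, rpow_neg (by positivity), pow_rpow_inv_natCast hx hk]

/-- For `n ≥ 3`, the function `r ↦ A(r)^(2/n) * B(r)^(-1/(n-1))`, where
`A(r) = ∫₀^r (sin τ)^(n-1) dτ` and `B(r) = (sin r)^(n-1)`, is monotonically
increasing (nondecreasing) on `(0, π/2)`. -/
theorem monotoneOn_integral_sin_pow_ratio (n : ℕ) (hn : 3 ≤ n) :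
    MonotoneOn (fun r : ℝ =>
      (∫ τ in (0:ℝ)..r, Real.sin τ ^ (n - 1)) ^ ((2 : ℝ) / (n : ℝ)) *
        (Real.sin r ^ (n - 1)) ^ (-(1 : ℝ) / ((n : ℝ) - 1)))
      (Set.Ioo 0 (π / 2)) := by
  obtain ⟨m, rfl⟩ : ∃ m, n = m + 1 := ⟨n - 1, by omega⟩
  have hm : m ≠ 0 := by omega
  have hp : 1 ≤ ((m : ℝ) + 1) * (2 / ((m + 1 : ℕ) : ℝ)) := by
    push_cast
    rw [mul_div_cancel₀ _ (by positivity)]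
    norm_num
  refine ((monotoneOn_integral_sin_pow_rpow_div_sin m hp).mono
    (Ioo_subset_Ioo_right (by linarith [pi_pos]))).congr fun r ⟨hr₀, hr⟩ => ?_
  have hsin : 0 ≤ sin r := sin_nonneg_of_nonneg_of_le_pi hr₀.le (by linarith [pi_pos])
  simp only [Nat.add_sub_cancel, Nat.cast_add, Nat.cast_one, add_sub_cancel_right]
  rw [pow_rpow_neg_one_div_natCast hsin hm, div_eq_mul_inv]
end

section
/- For any n ≥ 3 and any positive constants a, b, there exists a unique r ∈ (0, π/2) such that 2n(n-1) b · A(r)^{2/n} · B(r)^{-1/(n-1)} = a · cot r, where A(r) = (ω_{n-1}/2^n) ∫₀^r (sin τ)^{n-1} dτ and B(r) = (ω_{n-1}/2^{n-1}) (sin r)^{n-1} and ω_{n-1} is the volume of the unit (n-1)-sphere. -/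
open Real MeasureTheory

/-- For any `n ≥ 3` and positive constants `a, b`, there is a unique `r ∈ (0, π/2)` with
`2n(n-1) b A(r)^(2/n) B(r)^(-1/(n-1)) = a cot r`, where
`A(r) = (ω/2^n) ∫₀^r (sin τ)^(n-1) dτ`, `B(r) = (ω/2^(n-1)) (sin r)^(n-1)` and
`ω = ω_{n-1}` is the volume of the standard unit sphere in `ℝⁿ`
(equivalently, `n` times the volume of the unit ball). -/
theorem existsUnique_balancing_angle (n : ℕ) (hn : 3 ≤ n) (a b ω : ℝ)
    (ha : 0 < a) (hb : 0 < b)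
    (hω : ω = (n : ℝ) *
      (MeasureTheory.volume (Metric.ball (0 : EuclideanSpace ℝ (Fin n)) 1)).toReal) :
    ∃! r : ℝ, r ∈ Set.Ioo 0 (π / 2) ∧
      2 * (n : ℝ) * ((n : ℝ) - 1) * b *
          ((ω / 2 ^ n) * ∫ τ in (0:ℝ)..r, Real.sin τ ^ (n - 1)) ^ ((2 : ℝ) / (n : ℝ)) *
          ((ω / 2 ^ (n - 1)) * Real.sin r ^ (n - 1)) ^ (-(1 : ℝ) / ((n : ℝ) - 1)) =
        a * (Real.cos r / Real.sin r) := by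
  have hnR : (3:ℝ) ≤ (n:ℝ) := by exact_mod_cast hn
  have hn0 : (0:ℝ) < n := by linarith
  have hn1R : (0:ℝ) < (n:ℝ) - 1 := by linarith
  have hcast : ((n - 1 : ℕ) : ℝ) = (n : ℝ) - 1 := by
    have : (1:ℕ) ≤ n := by omega
    push_cast [Nat.cast_sub this]; ring
  have hωpos : 0 < ω := by
    rw [hω]
    have h1 : (0 : ENNReal) < MeasureTheory.volume (Metric.ball (0 : EuclideanSpace ℝ (Fin n)) 1) :=
      Metric.measure_ball_pos _ _ one_pos
    have h2 : MeasureTheory.volume (Metric.ball (0 : EuclideanSpace ℝ (Fin n)) 1) < ⊤ :=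
      measure_ball_lt_top
    exact mul_pos hn0 (ENNReal.toReal_pos h1.ne' h2.ne)
  -- the primitive S
  set S : ℝ → ℝ := fun r => ∫ τ in (0:ℝ)..r, Real.sin τ ^ (n - 1) with hSdef
  have hint : ∀ x y : ℝ, IntervalIntegrable (fun τ => Real.sin τ ^ (n-1)) volume x y :=
    fun x y => (Real.continuous_sin.pow _).intervalIntegrable x y
  have hScont : Continuous S := intervalIntegral.continuous_primitive hint 0
  have hSmono : StrictMonoOn S (Set.Icc 0 (π/2)) := by
    intro x hx y hy hxy
    have hadd : S x + (∫ τ in x..y, Real.sin τ ^ (n-1)) = S y :=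
      intervalIntegral.integral_add_adjacent_intervals (hint 0 x) (hint x y)
    have hpos : 0 < ∫ τ in x..y, Real.sin τ ^ (n-1) := by
      apply intervalIntegral.intervalIntegral_pos_of_pos_on (hint x y) _ hxy
      intro t ht
      have h1 : 0 < t := lt_of_le_of_lt hx.1 ht.1
      have h2 : t < π := lt_of_lt_of_le (lt_of_lt_of_le ht.2 hy.2)
        (by linarith [Real.pi_pos])
      exact pow_pos (Real.sin_pos_of_pos_of_lt_pi h1 h2) _
    linarith
  have hS0 : S 0 = 0 := intervalIntegral.integral_same
  have hSnonneg : ∀ x ∈ Set.Icc (0:ℝ) (π/2), 0 ≤ S x := by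
    intro x hx
    rcases eq_or_lt_of_le hx.1 with h | h
    · rw [← h, hS0]
    · have := hSmono (Set.left_mem_Icc.2 (by linarith [Real.pi_pos])) hx h
      rw [hS0] at this; exact le_of_lt this
  have h2n : (0:ℝ) < (2:ℝ)/(n:ℝ) := by positivity
  -- the constant and the auxiliary function g
  set C : ℝ := 2 * (n:ℝ) * ((n:ℝ) - 1) * b * (ω / 2^n) ^ ((2:ℝ)/(n:ℝ)) *
      (ω / 2^(n-1)) ^ (-(1:ℝ)/((n:ℝ)-1)) with hCdef
  have hCpos : 0 < C := by
    have h1 : (0:ℝ) < ω / 2^n := by positivity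
    have h2 : (0:ℝ) < ω / 2^(n-1) := by positivity
    have := Real.rpow_pos_of_pos h1 ((2:ℝ)/(n:ℝ))
    have := Real.rpow_pos_of_pos h2 (-(1:ℝ)/((n:ℝ)-1))
    positivity
  set g : ℝ → ℝ := fun r => C * (S r) ^ ((2:ℝ)/(n:ℝ)) - a * Real.cos r with hgdef
  have hgmono : StrictMonoOn g (Set.Icc 0 (π/2)) := by
    intro x hx y hy hxy
    have h1 : (S x) ^ ((2:ℝ)/(n:ℝ)) < (S y) ^ ((2:ℝ)/(n:ℝ)) :=
      Real.rpow_lt_rpow (hSnonneg x hx) (hSmono hx hy hxy) h2n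
    have h2 : Real.cos y < Real.cos x :=
      Real.cos_lt_cos_of_nonneg_of_le_pi hx.1 (by linarith [hy.2, Real.pi_pos]) hxy
    have := mul_lt_mul_of_pos_left h1 hCpos
    have := mul_lt_mul_of_pos_left h2 ha
    simp only [hgdef]
    linarith
  have hgcont : ContinuousOn g (Set.Icc 0 (π/2)) := by
    apply ContinuousOn.sub
    · exact continuousOn_const.mul
        (hScont.continuousOn.rpow_const (fun x _ => Or.inr h2n.le))
    · exact continuousOn_const.mul Real.continuous_cos.continuousOn
  have hpi2 : (0:ℝ) < π/2 := by linarith [Real.pi_pos]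
  have hg0 : g 0 = -a := by
    simp [hgdef, hS0, Real.zero_rpow h2n.ne']
  have hgpi : 0 < g (π/2) := by
    have hSpos : 0 < S (π/2) := by
      have := hSmono (Set.left_mem_Icc.2 hpi2.le) (Set.right_mem_Icc.2 hpi2.le) hpi2
      rwa [hS0] at this
    simp only [hgdef, Real.cos_pi_div_two, mul_zero, sub_zero]
    exact mul_pos hCpos (Real.rpow_pos_of_pos hSpos _)
  -- existence of a root of g
  have hmem : (0:ℝ) ∈ Set.Ioo (g 0) (g (π/2)) := by
    rw [hg0]; exact ⟨by linarith, hgpi⟩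
  obtain ⟨r, hr, hgr⟩ := intermediate_value_Ioo hpi2.le hgcont hmem
  -- the key equivalence
  have key : ∀ x ∈ Set.Ioo (0:ℝ) (π/2),
      (2 * (n : ℝ) * ((n : ℝ) - 1) * b *
          ((ω / 2 ^ n) * S x) ^ ((2 : ℝ) / (n : ℝ)) *
          ((ω / 2 ^ (n - 1)) * Real.sin x ^ (n - 1)) ^ (-(1 : ℝ) / ((n : ℝ) - 1)) =
        a * (Real.cos x / Real.sin x)) ↔ g x = 0 := by
    intro x hx
    have hsin : 0 < Real.sin x := Real.sin_pos_of_pos_of_lt_pi hx.1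
      (by linarith [hx.2, Real.pi_pos])
    have hSx : 0 ≤ S x := hSnonneg x ⟨hx.1.le, hx.2.le⟩
    have e1 : ((ω / 2 ^ n) * S x) ^ ((2 : ℝ) / (n : ℝ)) =
        (ω / 2 ^ n) ^ ((2:ℝ)/(n:ℝ)) * (S x) ^ ((2:ℝ)/(n:ℝ)) :=
      Real.mul_rpow (by positivity) hSx
    have e2 : ((ω / 2 ^ (n - 1)) * Real.sin x ^ (n - 1)) ^ (-(1 : ℝ) / ((n : ℝ) - 1)) =
        (ω / 2 ^ (n-1)) ^ (-(1:ℝ)/((n:ℝ)-1)) * (Real.sin x)⁻¹ := by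
      rw [Real.mul_rpow (by positivity) (by positivity)]
      congr 1
      rw [← Real.rpow_natCast (Real.sin x) (n-1), ← Real.rpow_mul hsin.le, hcast]
      rw [show ((n:ℝ) - 1) * (-(1:ℝ)/((n:ℝ)-1)) = -1 by field_simp]
      exact Real.rpow_neg_one _
    rw [e1, e2]
    rw [show 2 * (n : ℝ) * ((n : ℝ) - 1) * b *
          ((ω / 2 ^ n) ^ ((2:ℝ)/(n:ℝ)) * (S x) ^ ((2:ℝ)/(n:ℝ))) *
          ((ω / 2 ^ (n-1)) ^ (-(1:ℝ)/((n:ℝ)-1)) * (Real.sin x)⁻¹) =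
        (C * (S x) ^ ((2:ℝ)/(n:ℝ))) * (Real.sin x)⁻¹ by rw [hCdef]; ring]
    rw [show a * (Real.cos x / Real.sin x) = (a * Real.cos x) * (Real.sin x)⁻¹ by
      rw [div_eq_mul_inv]; ring]
    rw [mul_left_inj' (inv_ne_zero hsin.ne')]
    simp only [hgdef]
    constructor
    · intro h; rw [h]; ring
    · intro h; linarith
  refine ⟨r, ⟨hr, (key r hr).2 hgr⟩, ?_⟩
  rintro y ⟨hy, hye⟩
  have hgy : g y = 0 := (key y hy).1 hye
  have hyI : y ∈ Set.Icc (0:ℝ) (π/2) := ⟨hy.1.le, hy.2.le⟩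
  have hrI : r ∈ Set.Icc (0:ℝ) (π/2) := ⟨hr.1.le, hr.2.le⟩
  rcases lt_trichotomy y r with h | h | h
  · exact absurd (hgmono hyI hrI h) (by rw [hgy, hgr]; simp)
  · exact h
  · exact absurd (hgmono hrI hyI h) (by rw [hgy, hgr]; simp)
end

section
/- Let n ≥ 3, T_c ∈ ℝ, ε > 0, and W_ε(y) = (ε/(ε² + |y − T_c ε e_n|²))^{(n-2)/2} on ℝⁿ. Then for all i, j ∈ {1, …, n}, W_ε ∂_i∂_j W_ε − (n/(n−2)) ∂_i W_ε ∂_j W_ε = (1/n)(W_ε ΔW_ε − (n/(n−2)) |∇W_ε|²) δ_{ij}. -/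
/-!
Write `W = C G^q` with `G(y) = c + |y - a|²` (here `C = ε^p`, `q = -p`, `p = (n-2)/2`).
Then `∂_i W = 2qC G^(q-1) x_i` and `∂_i∂_j W = 2qC (2(q-1) G^(q-2) x_i x_j + G^(q-1) δ_ij)`,
with `x = y - a`. In `W ∂_i∂_j W - κ ∂_i W ∂_j W` the `x_i x_j` terms cancel exactly when
`κ q² = q(q-1)`, which for `κ = n/(n-2)` is the choice of exponent `q = -(n-2)/2`. What is
left is a multiple of `δ_ij`, and taking the trace identifies the multiple.
-/

/-- The `i`-th partial derivative of `f : ℝⁿ → ℝ` at `y`. -/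
noncomputable def pd (n : ℕ) (f : EuclideanSpace ℝ (Fin n) → ℝ) (i : Fin n)
    (y : EuclideanSpace ℝ (Fin n)) : ℝ :=
  fderiv ℝ f y (EuclideanSpace.single i 1)

/-- The Euclidean Laplacian of `f : ℝⁿ → ℝ` at `y`. -/
noncomputable def lap (n : ℕ) (f : EuclideanSpace ℝ (Fin n) → ℝ)
    (y : EuclideanSpace ℝ (Fin n)) : ℝ :=
  ∑ i, pd n (pd n f i) i y

noncomputable def bubbleBase {n : ℕ} (a : EuclideanSpace ℝ (Fin n)) (c : ℝ)
    (y : EuclideanSpace ℝ (Fin n)) : ℝ :=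
  c + ‖y - a‖ ^ 2

section Bubble

variable {n : ℕ} (a : EuclideanSpace ℝ (Fin n)) {c : ℝ}

lemma pd_eq_of_hasFDerivAt {f : EuclideanSpace ℝ (Fin n) → ℝ}
    {f' : EuclideanSpace ℝ (Fin n) →L[ℝ] ℝ} {y : EuclideanSpace ℝ (Fin n)}
    (h : HasFDerivAt f f' y) (i : Fin n) :
    pd n f i y = f' (EuclideanSpace.single i 1) := by
  rw [pd, h.fderiv]

lemma bubbleBase_pos (hc : 0 < c) (y : EuclideanSpace ℝ (Fin n)) : 0 < bubbleBase a c y := by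
  unfold bubbleBase; positivity

lemma hasFDerivAt_bubbleBase (y : EuclideanSpace ℝ (Fin n)) :
    HasFDerivAt (bubbleBase a c) (2 • innerSL ℝ (y - a)) y :=
  ((hasFDerivAt_id y).sub_const a).norm_sq.const_add c

lemma hasFDerivAt_coord_sub (j : Fin n) (y : EuclideanSpace ℝ (Fin n)) :
    HasFDerivAt (fun y : EuclideanSpace ℝ (Fin n) => y j - a j)
      (EuclideanSpace.proj j : EuclideanSpace ℝ (Fin n) →L[ℝ] ℝ) y :=
  (EuclideanSpace.proj (𝕜 := ℝ) j).hasFDerivAt.sub_const (a j)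

lemma pd_const_mul_rpow_bubbleBase (hc : 0 < c) (C q : ℝ) (i : Fin n) :
    pd n (fun y => C * bubbleBase a c y ^ q) i =
      fun y => 2 * q * C * (bubbleBase a c y ^ (q - 1) * (y i - a i)) := by
  funext y
  rw [pd_eq_of_hasFDerivAt (((hasFDerivAt_bubbleBase a y).rpow_const
    (Or.inl (bubbleBase_pos a hc y).ne')).const_mul C)]
  simp only [smul_apply, sub_apply, map_sub, coe_innerSL_apply,
    EuclideanSpace.inner_single_right, Real.ringHom_apply, one_mul, nsmul_eq_mul,
    Nat.cast_ofNat, smul_eq_mul]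
  ring

lemma pd_const_mul_rpow_bubbleBase_mul_coord (hc : 0 < c) (C q : ℝ) (i j : Fin n)
    (y : EuclideanSpace ℝ (Fin n)) :
    pd n (fun y => C * (bubbleBase a c y ^ q * (y j - a j))) i y =
      C * (2 * q * bubbleBase a c y ^ (q - 1) * (y i - a i) * (y j - a j)
        + bubbleBase a c y ^ q * if i = j then 1 else 0) := by
  rw [pd_eq_of_hasFDerivAt ((((hasFDerivAt_bubbleBase a y).rpow_const
    (Or.inl (bubbleBase_pos a hc y).ne')).fun_mul (hasFDerivAt_coord_sub a j y)).const_mul C)]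
  simp only [smul_apply, add_apply, sub_apply, map_sub, smul_add, PiLp.proj_apply,
    PiLp.single_apply, eq_comm, coe_innerSL_apply, EuclideanSpace.inner_single_right, Real.ringHom_apply,
    one_mul, nsmul_eq_mul, Nat.cast_ofNat, smul_eq_mul]
  split_ifs <;> ring

theorem rpow_bubbleBase_hessian_identity (hc : 0 < c) {C q κ : ℝ} (hκ : κ * q ^ 2 = q * (q - 1))
    {f : EuclideanSpace ℝ (Fin n) → ℝ} (hf : f = fun y => C * bubbleBase a c y ^ q)
    (i j : Fin n) (y : EuclideanSpace ℝ (Fin n)) :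
    f y * pd n (pd n f j) i y - κ * pd n f i y * pd n f j y =
      2 * q * C ^ 2 * bubbleBase a c y ^ (2 * q - 1) * if i = j then 1 else 0 := by
  subst hf
  simp only [pd_const_mul_rpow_bubbleBase a hc,
    pd_const_mul_rpow_bubbleBase_mul_coord a hc, sub_sub, one_add_one_eq_two]
  have hG := bubbleBase_pos a hc y
  set G := bubbleBase a c y
  set u := G ^ (q - 2)
  have h1 : G ^ (q - 1) = u * G := by
    rw [← Real.rpow_add_one hG.ne']; ring_nf
  have h0 : G ^ q = u * G * G := by
    rw [← h1, ← Real.rpow_add_one hG.ne']; ring_nf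
  have h2 : G ^ (2 * q - 1) = u * u * G * G * G := by
    rw [show 2 * q - 1 = (q - 1) + q by ring, Real.rpow_add hG, h1, h0]; ring
  rw [h0, h1, h2]
  linear_combination (-4 * C ^ 2 * u ^ 2 * G ^ 2 * (y i - a i) * (y j - a j)) * hκ

end Bubble

lemma eq_trace_div_card_mul_ite {ι : Type*} [Fintype ι] [DecidableEq ι] {M : ι → ι → ℝ}
    {μ : ℝ} (hM : ∀ i j, M i j = μ * if i = j then 1 else 0) (i j : ι) :
    M i j = 1 / (Fintype.card ι : ℝ) * (∑ k, M k k) * if i = j then 1 else 0 := by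
  have : Nonempty ι := ⟨i⟩
  have : (Fintype.card ι : ℝ) ≠ 0 := Nat.cast_ne_zero.2 Fintype.card_ne_zero
  simp [hM]

theorem bubble_hessian_identity_general (n : ℕ) (Tc ε : ℝ) (hε : 0 < ε)
    (en : Fin n)
    (W : EuclideanSpace ℝ (Fin n) → ℝ)
    (hW : ∀ y, W y =
      (ε / (ε ^ 2 + ‖y - (Tc * ε) • EuclideanSpace.single en (1:ℝ)‖ ^ 2))
        ^ (((n : ℝ) - 2) / 2)) :
    ∀ (i j : Fin n) (y : EuclideanSpace ℝ (Fin n)),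
      W y * pd n (pd n W j) i y - ((n : ℝ) / ((n : ℝ) - 2)) * pd n W i y * pd n W j y =
        (1 / (n : ℝ)) *
          (W y * lap n W y - ((n : ℝ) / ((n : ℝ) - 2)) * ∑ k, (pd n W k y) ^ 2) *
          (if i = j then 1 else 0) := by
  set p : ℝ := ((n : ℝ) - 2) / 2
  set a : EuclideanSpace ℝ (Fin n) := (Tc * ε) • EuclideanSpace.single en 1
  have hW' : W = fun y => ε ^ p * bubbleBase a (ε ^ 2) y ^ (-p) := by
    funext y
    rw [hW]
    change (ε / bubbleBase a (ε ^ 2) y) ^ p = _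
    rw [Real.div_rpow hε.le (bubbleBase_pos a (by positivity) y).le,
      Real.rpow_neg (bubbleBase_pos a (by positivity) y).le, div_eq_mul_inv]
  have hκ : (n : ℝ) / (n - 2) * (-p) ^ 2 = -p * (-p - 1) := by
    rcases eq_or_ne ((n : ℝ) - 2) 0 with h | h
    · simp [p, h]
    · field_simp; ring
  intro i j y
  have hM := rpow_bubbleBase_hessian_identity a (by positivity) hκ hW' (y := y)
  rw [eq_trace_div_card_mul_ite hM, Fintype.card_fin]
  simp only [lap, Finset.mul_sum, Finset.sum_sub_distrib, sq, mul_assoc]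

/-- The bubble `W_ε(y) = (ε/(ε² + |y − T_c ε e_n|²))^((n-2)/2)` satisfies the pointwise
identity `W_ε ∂_i∂_j W_ε − (n/(n−2)) ∂_iW_ε ∂_jW_ε
  = (1/n)(W_ε ΔW_ε − (n/(n−2)) |∇W_ε|²) δ_{ij}` on `ℝⁿ`. -/
theorem bubble_hessian_identity (n : ℕ) (hn : 3 ≤ n) (Tc ε : ℝ) (hε : 0 < ε)
    (en : Fin n) (hen : (en : ℕ) = n - 1)
    (W : EuclideanSpace ℝ (Fin n) → ℝ)
    (hW : ∀ y, W y =
      (ε / (ε ^ 2 + ‖y - (Tc * ε) • EuclideanSpace.single en (1:ℝ)‖ ^ 2))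
        ^ (((n : ℝ) - 2) / 2)) :
    ∀ (i j : Fin n) (y : EuclideanSpace ℝ (Fin n)),
      W y * pd n (pd n W j) i y - ((n : ℝ) / ((n : ℝ) - 2)) * pd n W i y * pd n W j y =
        (1 / (n : ℝ)) *
          (W y * lap n W y - ((n : ℝ) / ((n : ℝ) - 2)) * ∑ k, (pd n W k y) ^ 2) *
          (if i = j then 1 else 0) :=
  bubble_hessian_identity_general n Tc ε hε en W hW
end
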